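/- arXiv:1404.0263 — 2 statements merged into one kernel-verified Lean document; each statement's English description precedes it below -/
import Mathlib

section
/- Let G be the direct sum of countably many copies of ℤ and let f : G → ℂ be defined by f(x) = Σ_{i∈ℕ} x_i³. Then f is a generalized polynomial (of degree 3) but f is not a polynomial; in particular, the variety τ(f) contains every coordinate projection x ↦ x_i, these projections are linearly independent, and τ(f) is infinite dimensional. -/
/-- The difference operator: `(Δ_y f)(x) = f(x+y) - f(x)`. -/
def diffOp {G : Type*} [AddCommGroup G] (y : G) (f : G → ℂ) : G → ℂ :=
  fun x => f (x + y) - f x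

/-- `f` is a generalized polynomial: some iterated difference of order `n+1` always vanishes. -/
def IsGenPoly {G : Type*} [AddCommGroup G] (f : G → ℂ) : Prop :=
  ∃ n : ℕ, ∀ ys : List G, ys.length = n + 1 → ys.foldr diffOp f = 0

/-- An additive function is a homomorphism of `G` into `(ℂ, +)`. -/
def IsAdditiveFn {G : Type*} [AddCommGroup G] (a : G → ℂ) : Prop :=
  ∀ x y : G, a (x + y) = a x + a y

/-- `f` is a polynomial: it belongs to the complex function algebra generated by the
additive functions (constants lie in every subalgebra). -/
def IsPolyFn {G : Type*} [AddCommGroup G] (f : G → ℂ) : Prop :=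
  f ∈ Algebra.adjoin ℂ {a : G → ℂ | IsAdditiveFn a}

/-- The variety `τ(f)`: smallest translation-invariant linear subspace of `ℂ^G`
containing `f` which is closed under pointwise convergence. -/
noncomputable def variety {G : Type*} [AddCommGroup G] (f : G → ℂ) :
    Submodule ℂ (G → ℂ) :=
  (Submodule.span ℂ {g : G → ℂ | ∃ y : G, g = fun x => f (x + y)}).topologicalClosure

/-!
A polynomial generates a finite dimensional variety: the span of the translates of an additive
function `a` lies in `span {a, 1}`, and spans of translates of sums and products lie in sums and
products of such spans. On the other hand `(f(x + eᵢ) + f(x - eᵢ) - 2 f(x)) / 6 = xᵢ`, so `τ(f)`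
contains the infinitely many independent coordinate projections. The difference identities for
`f` are checked on the finite sums `Σ_{t ∈ S} x_t³`, which agree with `f` on all vectors
supported in `S`.
-/

section Translates

variable {G : Type*} [AddCommGroup G]

def translateSpan (f : G → ℂ) : Submodule ℂ (G → ℂ) :=
  Submodule.span ℂ {g : G → ℂ | ∃ y : G, g = fun x => f (x + y)}

lemma translate_mem_translateSpan (f : G → ℂ) (y : G) :
    (fun x => f (x + y)) ∈ translateSpan f :=
  Submodule.subset_span ⟨y, rfl⟩

lemma translateSpan_le_variety (f : G → ℂ) : translateSpan f ≤ variety f :=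
  Submodule.le_topologicalClosure _

lemma translateSpan_const_le (c : ℂ) :
    translateSpan (fun _ : G => c) ≤ Submodule.span ℂ {fun _ => c} :=
  Submodule.span_mono (by rintro _ ⟨y, rfl⟩; rfl)

lemma IsAdditiveFn.translateSpan_le {a : G → ℂ} (ha : IsAdditiveFn a) :
    translateSpan a ≤ Submodule.span ℂ {a, 1} := by
  refine Submodule.span_le.2 ?_
  rintro _ ⟨y, rfl⟩
  have hshift : (fun x => a (x + y)) = a + a y • (1 : G → ℂ) := by
    funext x
    simp [ha x y]
  rw [hshift]
  exact Submodule.add_mem _ (Submodule.subset_span (by simp))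
    (Submodule.smul_mem _ _ (Submodule.subset_span (by simp)))

lemma translateSpan_add_le (f g : G → ℂ) :
    translateSpan (f + g) ≤ translateSpan f ⊔ translateSpan g := by
  refine Submodule.span_le.2 ?_
  rintro _ ⟨y, rfl⟩
  exact Submodule.add_mem_sup (translate_mem_translateSpan f y) (translate_mem_translateSpan g y)

lemma translateSpan_mul_le (f g : G → ℂ) :
    translateSpan (f * g) ≤ translateSpan f * translateSpan g := by
  refine Submodule.span_le.2 ?_
  rintro _ ⟨y, rfl⟩
  exact Submodule.mul_mem_mul (translate_mem_translateSpan f y) (translate_mem_translateSpan g y)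

variable (G) in
def finiteTranslatesSubalgebra : Subalgebra ℂ (G → ℂ) where
  carrier := {f | (translateSpan f).FG}
  mul_mem' {f g} hf hg := (hf.mul hg).of_le (translateSpan_mul_le f g)
  add_mem' {f g} hf hg := (hf.sup hg).of_le (translateSpan_add_le f g)
  algebraMap_mem' c :=
    (Submodule.fg_span (Set.finite_singleton _)).of_le (translateSpan_const_le c)

lemma IsPolyFn.translateSpan_fg {f : G → ℂ} (hf : IsPolyFn f) : (translateSpan f).FG :=
  (Algebra.adjoin_le (S := finiteTranslatesSubalgebra G) fun _ ha =>
    (Submodule.fg_span ((Set.finite_singleton _).insert _)).of_le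
      (IsAdditiveFn.translateSpan_le ha)) hf

lemma IsPolyFn.finiteDimensional_variety {f : G → ℂ} (hf : IsPolyFn f) :
    FiniteDimensional ℂ (variety f) := by
  have : FiniteDimensional ℂ (translateSpan f) := Module.Finite.iff_fg.2 hf.translateSpan_fg
  rwa [variety, ← translateSpan,
    (translateSpan f).closed_of_finiteDimensional.submodule_topologicalClosure_eq]

lemma foldr_diffOp_apply_eq_of_eqOn (H : AddSubmonoid G) {f g : G → ℂ} (hfg : Set.EqOn f g H)
    (ys : List G) (hys : ∀ y ∈ ys, y ∈ H) {x : G} (hx : x ∈ H) :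
    ys.foldr diffOp f x = ys.foldr diffOp g x := by
  induction ys generalizing x with
  | nil => exact hfg hx
  | cons y ys ih =>
    have hys' : ∀ z ∈ ys, z ∈ H := fun z hz => hys z (List.mem_cons_of_mem y hz)
    change _ - _ = _ - _
    rw [ih hys' (H.add_mem hx (hys y List.mem_cons_self)), ih hys' hx]

end Translates

lemma not_finiteDimensional_of_linearIndependent_mem {K M ι : Type*} [DivisionRing K]
    [AddCommGroup M] [Module K M] [Infinite ι] (W : Submodule K M) {v : ι → M}
    (hv : LinearIndependent K v) (hvW : ∀ i, v i ∈ W) : ¬ FiniteDimensional K W := fun _ =>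
  Module.Finite.not_linearIndependent_of_infinite (fun i => (⟨v i, hvW i⟩ : W))
    (LinearIndependent.of_comp W.subtype hv)

lemma linearIndependent_coordinate {ι : Type*} :
    LinearIndependent ℂ (fun (i : ι) (x : ι →₀ ℤ) => (x i : ℂ)) := by
  classical
  refine LinearIndependent.of_comp (LinearMap.funLeft ℂ ℂ fun j => Finsupp.single j 1) ?_
  convert Pi.linearIndependent_single_one ι ℂ using 1
  ext i j
  simp [LinearMap.funLeft_apply, Finsupp.single_apply, Pi.single_apply, eq_comm]

section SumCubes

variable {ι : Type*}

def cubeSum (S : Finset ι) (x : ι →₀ ℤ) : ℂ :=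
  ∑ t ∈ S, (x t : ℂ) ^ 3

lemma diffOp_diffOp_diffOp_cubeSum (S : Finset ι) (y z w x : ι →₀ ℤ) :
    diffOp y (diffOp z (diffOp w (cubeSum S))) x = 6 * ∑ t ∈ S, (y t : ℂ) * z t * w t := by
  simp only [diffOp, cubeSum, ← Finset.sum_sub_distrib, Finset.mul_sum, Finsupp.add_apply]
  refine Finset.sum_congr rfl fun t _ => ?_
  push_cast
  ring

lemma cubeSum_second_diff_single (S : Finset ι) {i : ι} (hi : i ∈ S) (x : ι →₀ ℤ) :
    cubeSum S (x + Finsupp.single i 1) + cubeSum S (x + Finsupp.single i (-1)) -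
      2 * cubeSum S x = 6 * x i := by
  simp only [cubeSum, ← Finset.sum_add_distrib, Finset.mul_sum, ← Finset.sum_sub_distrib]
  rw [Finset.sum_eq_single_of_mem i hi]
  · simp only [Finsupp.add_apply, Finsupp.single_eq_same]
    push_cast
    ring
  · intro t _ hti
    simp only [Finsupp.add_apply, Finsupp.single_eq_of_ne hti, add_zero]
    ring

variable {f : (ι →₀ ℤ) → ℂ} (hf : ∀ x : ι →₀ ℤ, f x = x.sum fun _ m => (m : ℂ) ^ 3)
include hf

lemma sumCubes_eq_cubeSum {S : Finset ι} {x : ι →₀ ℤ} (hx : x.support ⊆ S) :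
    f x = cubeSum S x := by
  rw [hf, cubeSum]
  exact Finsupp.sum_of_support_subset _ hx _ (by simp)

lemma foldr_diffOp_apply_eq_cubeSum {S : Finset ι} (ys : List (ι →₀ ℤ))
    (hys : ∀ y ∈ ys, y.support ⊆ S) {x : ι →₀ ℤ} (hx : x.support ⊆ S) :
    ys.foldr diffOp f x = ys.foldr diffOp (cubeSum S) x :=
  foldr_diffOp_apply_eq_of_eqOn (Finsupp.supported ℤ ℤ (S : Set ι)).toAddSubmonoid
    (fun _ hy => sumCubes_eq_cubeSum hf (by simpa [Finsupp.mem_supported] using hy)) ys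
    (fun y hy => by simpa [Finsupp.mem_supported] using hys y hy)
    (by simpa [Finsupp.mem_supported] using hx)

lemma sumCubes_fourth_diff (ys : List (ι →₀ ℤ)) (hys : ys.length = 4) :
    ys.foldr diffOp f = 0 := by
  classical
  funext x
  obtain ⟨a, b, c, d, rfl⟩ := List.length_eq_four.1 hys
  set S := x.support ∪ [a, b, c, d].toFinset.biUnion Finsupp.support
  rw [foldr_diffOp_apply_eq_cubeSum hf (S := S) _
    (fun y hy => (Finset.subset_biUnion_of_mem _ (List.mem_toFinset.2 hy)).trans
      Finset.subset_union_right) Finset.subset_union_left]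
  change diffOp b (diffOp c (diffOp d (cubeSum S))) (x + a) -
    diffOp b (diffOp c (diffOp d (cubeSum S))) x = 0
  rw [diffOp_diffOp_diffOp_cubeSum, diffOp_diffOp_diffOp_cubeSum, sub_self]

lemma sumCubes_third_diff_single_ne_zero (i : ι) :
    [Finsupp.single i 1, Finsupp.single i 1, Finsupp.single i 1].foldr diffOp f 0 ≠ 0 := by
  rw [foldr_diffOp_apply_eq_cubeSum hf (S := {i}) _ (fun y hy => by simp_all) (by simp)]
  change diffOp _ (diffOp _ (diffOp _ (cubeSum {i}))) 0 ≠ 0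
  simp [diffOp_diffOp_diffOp_cubeSum]

lemma coordinate_mem_translateSpan (i : ι) : (fun x : ι →₀ ℤ => (x i : ℂ)) ∈ translateSpan f := by
  classical
  have hcoord : (fun x : ι →₀ ℤ => (x i : ℂ)) =
      (6⁻¹ : ℂ) • ((fun x => f (x + Finsupp.single i 1)) +
        (fun x => f (x + Finsupp.single i (-1))) - (2 : ℂ) • fun x => f (x + 0)) := by
    funext x
    have hx : x.support ⊆ insert i x.support := Finset.subset_insert i x.support
    have hshift (n : ℤ) : (x + Finsupp.single i n).support ⊆ insert i x.support :=
      Finsupp.support_add.trans <| Finset.union_subset hx <|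
        Finsupp.support_single_subset.trans (by simp)
    simp only [Pi.smul_apply, Pi.add_apply, Pi.sub_apply, smul_eq_mul, add_zero]
    rw [sumCubes_eq_cubeSum hf (hshift 1), sumCubes_eq_cubeSum hf (hshift (-1)),
      sumCubes_eq_cubeSum hf hx,
      cubeSum_second_diff_single _ (Finset.mem_insert_self i _)]
    ring
  rw [hcoord]
  exact Submodule.smul_mem _ _ (Submodule.sub_mem _
    (Submodule.add_mem _ (translate_mem_translateSpan f _) (translate_mem_translateSpan f _))
    (Submodule.smul_mem _ _ (translate_mem_translateSpan f _)))

end SumCubes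

/-- For `G = ⊕_{i ∈ ℕ} ℤ` and `f(x) = Σ_i x_i ^ 3`: `f` is a generalized polynomial of
degree `3`, it is not a polynomial, the variety `τ(f)` contains all coordinate
projections, these are linearly independent, and `τ(f)` is infinite dimensional. -/
theorem sumCubes_genPoly_not_poly
    (f : (ℕ →₀ ℤ) → ℂ) (hf : ∀ x : ℕ →₀ ℤ, f x = x.sum fun _ m => (m : ℂ) ^ 3) :
    (∀ ys : List (ℕ →₀ ℤ), ys.length = 4 → ys.foldr diffOp f = 0) ∧
    ¬ (∀ ys : List (ℕ →₀ ℤ), ys.length = 3 → ys.foldr diffOp f = 0) ∧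
    ¬ IsPolyFn f ∧
    (∀ i : ℕ, (fun x : ℕ →₀ ℤ => (x i : ℂ)) ∈ variety f) ∧
    LinearIndependent ℂ (fun (i : ℕ) (x : ℕ →₀ ℤ) => (x i : ℂ)) ∧
    ¬ FiniteDimensional ℂ ↥(variety f) := by
  have hcoord : ∀ i : ℕ, (fun x : ℕ →₀ ℤ => (x i : ℂ)) ∈ variety f := fun i =>
    translateSpan_le_variety f (coordinate_mem_translateSpan hf i)
  have hinfinite : ¬ FiniteDimensional ℂ (variety f) :=
    not_finiteDimensional_of_linearIndependent_mem _ linearIndependent_coordinate hcoord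
  exact ⟨sumCubes_fourth_diff hf,
    fun h => sumCubes_third_diff_single_ne_zero hf 0 (congrFun (h _ rfl) 0),
    fun hpoly => hinfinite hpoly.finiteDimensional_variety,
    hcoord, linearIndependent_coordinate, hinfinite⟩
end

section
/- Let G be an abelian group. Then every generalized polynomial f : G → ℂ is a local polynomial, i.e. the restriction of f to every finitely generated subgroup of G is a polynomial. -/
/-!
Along a direction `y`, Newton's forward-difference formula writes `t ↦ f (x + t • y)` as a
combination of the binomial coefficients `Ring.choose t j`, `j < n`, i.e. as a polynomial in `t`.
A periodic polynomial is constant, so `f` is invariant under translation by torsion elements.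
A finitely generated abelian group is `ℤ^r` up to torsion, with coordinates that are additive
functions; iterating Newton's formula over the `r` free generators writes `f` on the subgroup as a
polynomial in binomial coefficients of these coordinates, and `Ring.choose a j` is a polynomial
in `a`.
-/

open Polynomial Finset

theorem Int.eq_of_forall_sub_eq {M : Type*} [AddCommGroup M] {u v : ℤ → M} (h0 : u 0 = v 0)
    (h : ∀ t, u (t + 1) - u t = v (t + 1) - v t) : u = v := by
  funext t
  rw [← sub_eq_zero]
  induction t using Int.induction_on with
  | zero => rw [h0, sub_self]
  | succ k hk => rw [sub_eq_sub_iff_sub_eq_sub.1 (h k), hk]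
  | pred k hk =>
    have hk' := sub_eq_sub_iff_sub_eq_sub.1 (h (-k - 1))
    rw [sub_add_cancel] at hk'
    rw [← hk', hk]

theorem Polynomial.eval_choose_X {K : Type*} [Field K] [CharZero K] (z : K) (j : ℕ) :
    (Ring.choose (X : K[X]) j).eval z = Ring.choose z j := by
  simpa using Ring.map_choose (evalRingHom z) X j

theorem AddGroup.FG.exists_coords_modulo_torsion (H : Type*) [AddCommGroup H] [AddGroup.FG H] :
    ∃ (r : ℕ) (c : Fin r → H) (φ : H →+ Fin r → ℤ),
      ∀ x, IsOfFinAddOrder (x - ∑ i, φ x i • c i) := by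
  obtain ⟨r, ι, _, p, hp, e, ⟨E⟩⟩ := AddCommGroup.equiv_free_prod_directSum_zmod H
  have : ∀ i, NeZero (p i ^ e i) := fun i => ⟨pow_ne_zero _ (hp i).ne_zero⟩
  have : Finite (DirectSum ι fun i => ZMod (p i ^ e i)) :=
    Finite.of_equiv _ DFinsupp.equivFunOnFintype.symm
  refine ⟨r, fun i => E.symm (Finsupp.single i 1, 0),
    Finsupp.addEquivFunOnFinite.toAddMonoidHom.comp ((AddMonoidHom.fst _ _).comp E.toAddMonoidHom),
    fun x => ?_⟩
  have htorsion : x - ∑ i, (E x).1 i • E.symm (Finsupp.single i 1, 0) = E.symm (0, (E x).2) := by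
    apply E.injective
    simp only [map_sub, map_sum, map_zsmul, AddEquiv.apply_symm_apply]
    ext i : 2 <;> simp [Prod.fst_sum, Prod.snd_sum]
  change IsOfFinAddOrder (x - ∑ i, (E x).1 i • E.symm (Finsupp.single i 1, 0))
  rw [htorsion]
  exact (E.symm.toAddMonoidHom.comp (AddMonoidHom.inr _ _)).isOfFinAddOrder
    (isOfFinAddOrder_of_finite (E x).2)

section PolyFn

variable {H K : Type*} [AddCommGroup H] [AddCommGroup K]

theorem IsAdditiveFn.comp {a : K → ℂ} (ha : IsAdditiveFn a) (φ : H →+ K) :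
    IsAdditiveFn (a ∘ φ) :=
  fun x y => by simpa using ha (φ x) (φ y)

theorem IsPolyFn.comp_addMonoidHom {g : K → ℂ} (hg : IsPolyFn g) (φ : H →+ K) :
    IsPolyFn (g ∘ φ) := by
  let Φ : (K → ℂ) →ₐ[ℂ] (H → ℂ) := AlgHom.pi fun x => Pi.evalAlgHom ℂ _ (φ x)
  have hmem : Φ g ∈ Algebra.adjoin ℂ (Φ '' {a | IsAdditiveFn a}) := by
    rw [Algebra.adjoin_image]
    exact Subalgebra.mem_map.2 ⟨g, hg, rfl⟩
  refine Algebra.adjoin_mono ?_ hmem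
  rintro _ ⟨a, ha, rfl⟩
  exact IsAdditiveFn.comp ha φ

theorem isPolyFn_choose {a : H → ℂ} (ha : IsAdditiveFn a) (j : ℕ) :
    IsPolyFn fun x => Ring.choose (a x) j := by
  have hchoose : (fun x => Ring.choose (a x) j) = aeval a (Ring.choose (X : ℂ[X]) j) := by
    funext x
    rw [Ring.map_choose, aeval_X]
    exact (Ring.map_choose (Pi.evalRingHom (fun _ => ℂ) x) a j).symm
  rw [IsPolyFn, hchoose]
  exact Algebra.adjoin_mono (Set.singleton_subset_iff.2 ha) (aeval_mem_adjoin_singleton ℂ a)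

end PolyFn

section GenPoly

variable {G : Type*} [AddCommGroup G] {f : G → ℂ} {n : ℕ}

theorem foldr_diffOp_zero (ys : List G) : ys.foldr diffOp (0 : G → ℂ) = 0 := by
  induction ys with
  | nil => rfl
  | cons y ys ih => funext x; simp [ih, diffOp]

theorem foldr_replicate_diffOp (y : G) (f : G → ℂ) (j : ℕ) :
    (List.replicate j y).foldr diffOp f = (diffOp y)^[j] f := by
  induction j with
  | zero => rfl
  | succ j ih => rw [List.replicate_succ, List.foldr_cons, ih, Function.iterate_succ_apply']

theorem diffOp_apply_add_zsmul (y : G) (f : G → ℂ) (x : G) (t : ℤ) :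
    diffOp y f (x + t • y) = f (x + (t + 1) • y) - f (x + t • y) := by
  rw [diffOp, add_smul, one_smul, add_assoc]

/-- Newton's forward-difference formula. -/
theorem apply_add_zsmul_eq_sum_choose {y : G} (hf : (diffOp y)^[n] f = 0) (x : G) (t : ℤ) :
    f (x + t • y) = ∑ j ∈ range n, (diffOp y)^[j] f x * Ring.choose (t : ℂ) j := by
  induction n generalizing f t with
  | zero => simp [show f = 0 from hf]
  | succ n ih =>
    have hΔ := ih (f := diffOp y f) (by rwa [← Function.iterate_succ_apply])
    suffices (fun t : ℤ => f (x + t • y)) =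
        fun t : ℤ => ∑ j ∈ range (n + 1), (diffOp y)^[j] f x * Ring.choose (t : ℂ) j from
      congrFun this t
    refine Int.eq_of_forall_sub_eq ?_ fun s => ?_
    · simp [sum_range_succ', Ring.choose_zero_succ]
    · simp only [← diffOp_apply_add_zsmul, hΔ, ← sum_sub_distrib, ← mul_sub, Int.cast_add,
        Int.cast_one]
      simp [sum_range_succ', Ring.choose_succ_succ, Function.iterate_succ_apply]

-- `t ↦ f (x + t • y)` is a polynomial in `t` and `m`-periodic, hence constant.
theorem apply_add_of_isOfFinAddOrder {y : G} (hf : (diffOp y)^[n] f = 0)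
    (hy : IsOfFinAddOrder y) (x : G) : f (x + y) = f x := by
  obtain ⟨m, hm, hmy⟩ := isOfFinAddOrder_iff_nsmul_eq_zero.1 hy
  set P : ℂ[X] := ∑ j ∈ range n, C ((diffOp y)^[j] f x) * Ring.choose X j
  have hP : ∀ t : ℤ, P.eval (t : ℂ) = f (x + t • y) := fun t => by
    simp [P, eval_finsetSum, eval_choose_X, apply_add_zsmul_eq_sum_choose hf]
  have hperiodic : ∀ k : ℕ, P.eval (k * m : ℂ) = P.eval 0 := fun k => by
    rw [← Nat.cast_mul, ← Int.cast_natCast, hP, ← Int.cast_zero, hP]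
    simp [natCast_zsmul, mul_smul, hmy]
  have hconst : P = C (P.eval 0) := by
    rw [← sub_eq_zero]
    refine eq_zero_of_infinite_isRoot _ (Set.infinite_of_injective_forall_mem
      (f := fun k : ℕ => (k * m : ℂ)) (fun k l hkl => ?_) fun k => by simp [hperiodic k])
    simpa [hm.ne'] using hkl
  have hP1 : P.eval 1 = P.eval 0 := by
    rw [hconst]
    simp
  have hx1 := hP 1
  have hx0 := hP 0
  simp only [Int.cast_one, Int.cast_zero, one_smul, zero_smul, add_zero] at hx1 hx0
  rw [← hx1, ← hx0, hP1]

def IsGenPolyDegreeLT (n : ℕ) (f : G → ℂ) : Prop :=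
  ∀ ys : List G, n ≤ ys.length → ys.foldr diffOp f = 0

theorem IsGenPoly.exists_isGenPolyDegreeLT (hf : IsGenPoly f) : ∃ n, IsGenPolyDegreeLT n f := by
  obtain ⟨n, hn⟩ := hf
  refine ⟨n + 1, fun ys hys => ?_⟩
  rw [← List.take_append_drop (ys.length - (n + 1)) ys, List.foldr_append,
    hn _ (by simp; omega), foldr_diffOp_zero]

theorem IsGenPolyDegreeLT.iterate_diffOp_eq_zero (hf : IsGenPolyDegreeLT n f) (y : G) :
    (diffOp y)^[n] f = 0 := by
  rw [← foldr_replicate_diffOp]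
  exact hf _ (by simp)

theorem IsGenPolyDegreeLT.iterate_diffOp (hf : IsGenPolyDegreeLT n f) (y : G) (j : ℕ) :
    IsGenPolyDegreeLT n ((diffOp y)^[j] f) := fun ys hys => by
  rw [← foldr_replicate_diffOp, ← List.foldr_append]
  exact hf _ (by simp; omega)

theorem IsGenPolyDegreeLT.isPolyFn_sum_zsmul {r : ℕ} (hf : IsGenPolyDegreeLT n f)
    (e : Fin r → G) :
    IsPolyFn fun t : Fin r → ℤ => f (∑ i, t i • e i) := by
  induction r generalizing f with
  | zero =>
    simp only [univ_eq_empty, sum_empty]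
    exact Subalgebra.algebraMap_mem _ (f 0)
  | succ r ih =>
    have hexpand : (fun t : Fin (r + 1) → ℤ => f (∑ i, t i • e i)) =
        ∑ j ∈ range n,
          (fun t : Fin (r + 1) → ℤ => (diffOp (e 0))^[j] f (∑ i : Fin r, t i.succ • e i.succ)) *
            fun t => Ring.choose ((t 0 : ℤ) : ℂ) j := by
      funext t
      rw [Fin.sum_univ_succ, add_comm,
        apply_add_zsmul_eq_sum_choose (hf.iterate_diffOp_eq_zero (e 0))]
      simp [Finset.sum_apply]
    rw [IsPolyFn, hexpand]
    refine Subalgebra.sum_mem _ fun j _ => Subalgebra.mul_mem _ ?_ ?_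
    · exact (ih (hf.iterate_diffOp (e 0) j) (e ∘ Fin.succ)).comp_addMonoidHom
        (LinearMap.funLeft ℤ ℤ Fin.succ).toAddMonoidHom
    · exact isPolyFn_choose (fun s t => by simp) j

end GenPoly

/-- Every generalized polynomial is a local polynomial: its restriction to every
finitely generated subgroup is a polynomial. -/
theorem genPoly_isLocalPoly
    {G : Type*} [AddCommGroup G] (f : G → ℂ) (hf : IsGenPoly f) :
    ∀ H : AddSubgroup G, H.FG → IsPolyFn (fun x : H => f x) := by
  intro H hH
  have : AddGroup.FG H := (AddGroup.fg_iff_addSubgroup_fg H).2 hH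
  obtain ⟨n, hn⟩ := hf.exists_isGenPolyDegreeLT
  obtain ⟨r, c, φ, hφ⟩ := AddGroup.FG.exists_coords_modulo_torsion H
  have hfactor : (fun x : H => f x) = (fun t : Fin r → ℤ => f (∑ i, t i • (c i : G))) ∘ φ := by
    funext x
    have htorsion := H.subtype.isOfFinAddOrder (hφ x)
    simpa using apply_add_of_isOfFinAddOrder (hn.iterate_diffOp_eq_zero _) htorsion
      (∑ i, φ x i • (c i : G))
  rw [IsPolyFn, hfactor]
  exact (hn.isPolyFn_sum_zsmul _).comp_addMonoidHom φ
end
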